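/- arXiv:0806.3260 — 2 statements merged into one kernel-verified Lean document; each statement's English description precedes it below -/
import Mathlib

section
/- Let A be an n×n complex normal matrix, let r₀ ∈ ℂⁿ, and let m ≥ 1. Suppose p ∈ ℂ[z] with deg p ≤ m and p(0) = 1 satisfies ‖p(A) r₀‖ ≤ ‖q(A) r₀‖ for every polynomial q with deg q ≤ m and q(0) = 1 (i.e., p is a GMRES minimizing polynomial for A and r₀). Then the conjugated polynomial p̄ is a GMRES minimizing polynomial for Aᴴ and r₀: deg p̄ ≤ m, p̄(0) = 1, and ‖p̄(Aᴴ) r₀‖ ≤ ‖q(Aᴴ) r₀‖ for every polynomial q with deg q ≤ m and q(0) = 1. -/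
open Polynomial Matrix

noncomputable def euclNorm {n : ℕ} (v : Fin n → ℂ) : ℝ :=
  ‖(WithLp.equiv 2 (Fin n → ℂ)).symm v‖

def IsGMRESResidual {n : ℕ} (m : ℕ) (A : Matrix (Fin n) (Fin n) ℂ)
    (r s : Fin n → ℂ) : Prop :=
  ∃ p : ℂ[X], p.natDegree ≤ m ∧ p.eval 0 = 1 ∧ s = (aeval A p).mulVec r ∧
    ∀ q : ℂ[X], q.natDegree ≤ m → q.eval 0 = 1 →
      euclNorm s ≤ euclNorm ((aeval A q).mulVec r)

noncomputable def krylov {n : ℕ} (m : ℕ) (A : Matrix (Fin n) (Fin n) ℂ) (r : Fin n → ℂ) :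
    Matrix (Fin n) (Fin (m + 1)) ℂ :=
  Matrix.of fun i j => (A ^ (j : ℕ)).mulVec r i

/-!
Conjugating coefficients intertwines the polynomial calculi of `A` and `Aᴴ`:
`p̄(Aᴴ) = p(A)ᴴ`. Since `p(A)` is again normal, `‖p(A)ᴴ r‖ = ‖p(A) r‖`, so `q ↦ q̄` is a
bijection of the admissible polynomials that preserves the residual norm when passing from `A`
to `Aᴴ`; minimizers therefore correspond.
-/

section StarAlgebra

variable {R A : Type*} [CommSemiring R] [StarRing R] [Semiring A] [StarRing A] [Algebra R A]
  [StarModule R A]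

theorem Polynomial.aeval_star_map_star (a : A) (q : R[X]) :
    aeval (star a) (q.map (starRingEnd R)) = star (aeval a q) := by
  induction q using Polynomial.induction_on' with
  | add p q hp hq => simp only [Polynomial.map_add, map_add, hp, hq, star_add]
  | monomial k c =>
    rw [map_monomial, aeval_monomial, aeval_monomial, star_mul, star_pow, ← algebraMap_star_comm]
    exact Algebra.commutes _ _

theorem IsStarNormal.aeval {a : A} [IsStarNormal a] (q : R[X]) :
    IsStarNormal (Polynomial.aeval a q) := by
  have hstar : Commute (Polynomial.aeval a q) (star a) :=
    (Algebra.commute_of_mem_adjoin_singleton_of_commute (aeval_mem_adjoin_singleton R a)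
      (star_comm_self' a)).symm
  exact ⟨(Algebra.commute_of_mem_adjoin_singleton_of_commute
    (aeval_star_map_star a q ▸ aeval_mem_adjoin_singleton R (star a)) hstar).symm⟩

end StarAlgebra

theorem euclNorm_conjTranspose_mulVec {n : ℕ} {B : Matrix (Fin n) (Fin n) ℂ} [IsStarNormal B]
    (r : Fin n → ℂ) : euclNorm (Bᴴ *ᵥ r) = euclNorm (B *ᵥ r) := by
  have : IsStarNormal (toEuclideanCLM (n := Fin n) (𝕜 := ℂ) B) := IsStarNormal.map _ B
  have h := ContinuousLinearMap.isStarNormal_iff_norm_eq_adjoint.mp this (WithLp.toLp 2 r)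
  rw [← ContinuousLinearMap.star_eq_adjoint, ← map_star] at h
  exact h.symm

theorem euclNorm_aeval_conjTranspose_map_star {n : ℕ} {A : Matrix (Fin n) (Fin n) ℂ}
    [IsStarNormal A] (q : ℂ[X]) (r : Fin n → ℂ) :
    euclNorm (aeval Aᴴ (q.map (starRingEnd ℂ)) *ᵥ r) = euclNorm (aeval A q *ᵥ r) := by
  have : IsStarNormal (aeval A q) := IsStarNormal.aeval q
  rw [← star_eq_conjTranspose, aeval_star_map_star, star_eq_conjTranspose]
  exact euclNorm_conjTranspose_mulVec r

theorem conj_poly_is_gmres_minimizer_conjTranspose_general {n : ℕ} (m : ℕ)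
    (A : Matrix (Fin n) (Fin n) ℂ) (hnormal : A * Aᴴ = Aᴴ * A)
    (r₀ : Fin n → ℂ) (p : ℂ[X]) (hdeg : p.natDegree ≤ m) (hp0 : p.eval 0 = 1)
    (hmin : ∀ q : ℂ[X], q.natDegree ≤ m → q.eval 0 = 1 →
      euclNorm ((aeval A p).mulVec r₀) ≤ euclNorm ((aeval A q).mulVec r₀)) :
    (p.map (starRingEnd ℂ)).natDegree ≤ m ∧ (p.map (starRingEnd ℂ)).eval 0 = 1 ∧
      ∀ q : ℂ[X], q.natDegree ≤ m → q.eval 0 = 1 →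
        euclNorm ((aeval Aᴴ (p.map (starRingEnd ℂ))).mulVec r₀) ≤
          euclNorm ((aeval Aᴴ q).mulVec r₀) := by
  have : IsStarNormal A := ⟨hnormal.symm⟩
  have eval_zero_map_star {q : ℂ[X]} (hq0 : q.eval 0 = 1) :
      (q.map (starRingEnd ℂ)).eval 0 = 1 := by
    rw [eval_zero_map, hq0, map_one]
  refine ⟨(natDegree_map _).trans_le hdeg, eval_zero_map_star hp0, fun q hq hq0 => ?_⟩
  have hq_conj_conj : (q.map (starRingEnd ℂ)).map (starRingEnd ℂ) = q := by
    simp [Polynomial.map_map]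
  calc euclNorm (aeval Aᴴ (p.map (starRingEnd ℂ)) *ᵥ r₀)
      = euclNorm (aeval A p *ᵥ r₀) := euclNorm_aeval_conjTranspose_map_star p r₀
    _ ≤ euclNorm (aeval A (q.map (starRingEnd ℂ)) *ᵥ r₀) :=
        hmin _ ((natDegree_map _).trans_le hq) (eval_zero_map_star hq0)
    _ = euclNorm (aeval Aᴴ q *ᵥ r₀) := by
        rw [← euclNorm_aeval_conjTranspose_map_star, hq_conj_conj]

/-- If `p` is a GMRES minimizing polynomial for a normal matrix `A` and `r₀`, then the
conjugated polynomial `p̄` is a GMRES minimizing polynomial for `Aᴴ` and `r₀`. -/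
theorem conj_poly_is_gmres_minimizer_conjTranspose {n : ℕ} (m : ℕ) (hm : 1 ≤ m)
    (A : Matrix (Fin n) (Fin n) ℂ) (hnormal : A * Aᴴ = Aᴴ * A)
    (r₀ : Fin n → ℂ) (p : ℂ[X]) (hdeg : p.natDegree ≤ m) (hp0 : p.eval 0 = 1)
    (hmin : ∀ q : ℂ[X], q.natDegree ≤ m → q.eval 0 = 1 →
      euclNorm ((aeval A p).mulVec r₀) ≤ euclNorm ((aeval A q).mulVec r₀)) :
    (p.map (starRingEnd ℂ)).natDegree ≤ m ∧ (p.map (starRingEnd ℂ)).eval 0 = 1 ∧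
      ∀ q : ℂ[X], q.natDegree ≤ m → q.eval 0 = 1 →
        euclNorm ((aeval Aᴴ (p.map (starRingEnd ℂ))).mulVec r₀) ≤
          euclNorm ((aeval Aᴴ q).mulVec r₀) :=
  conj_poly_is_gmres_minimizer_conjTranspose_general m A hnormal r₀ p hdeg hp0 hmin
end

section
/- Let A be an n×n complex normal invertible matrix and let 1 ≤ m ≤ n−1. Let r_{k−1} ∈ ℂⁿ, let r_k be a nonzero GMRES(m) residual of A from r_{k−1}, and let r̂_{k+1} be a nonzero GMRES(m) residual of Aᴴ from r_k. Then ‖r_k‖² ≤ ‖r_{k−1}‖ · ‖r̂_{k+1}‖ (equivalently, ‖r_k‖/‖r_{k−1}‖ ≤ ‖r̂_{k+1}‖/‖r_k‖). -/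
/-!
GMRES optimality of `r_k = p(A) r_{k-1}` makes `r_k` orthogonal to `q(A) r_{k-1}` for every
polynomial `q` of degree at most `m` with `q(0) = 0`. Hence
`⟪r_k, q(A) r_{k-1}⟫ = ⟪r_k, r_{k-1}⟫` whenever `q(0) = 1`. Taking `q = p` gives
`‖r_k‖² = ⟪r_k, r_{k-1}⟫`, and moving `Aᴴ` across the inner product gives
`⟪r̂_{k+1}, r_{k-1}⟫ = ⟪r_k, q̄(A) r_{k-1}⟫ = ⟪r_k, r_{k-1}⟫` for `r̂_{k+1} = q(Aᴴ) r_k`.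
Cauchy–Schwarz finishes.
-/

open Polynomial Matrix

open WithLp
open scoped InnerProductSpace

theorem inner_eq_zero_of_forall_norm_le_norm_add_smul {𝕜 E : Type*} [RCLike 𝕜]
    [NormedAddCommGroup E] [InnerProductSpace 𝕜 E] {s v : E}
    (h : ∀ c : 𝕜, ‖s‖ ≤ ‖s + c • v‖) : ⟪v, s⟫_𝕜 = 0 := by
  have hmin : ‖s - 0‖ = ⨅ w : 𝕜 ∙ v, ‖s - w‖ := by
    refine le_antisymm (le_ciInf fun ⟨w, hw⟩ => ?_) ?_
    · obtain ⟨c, rfl⟩ := Submodule.mem_span_singleton.mp hw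
      simpa [sub_eq_add_neg, ← neg_smul] using h (-c)
    · exact ciInf_le ⟨0, Set.forall_mem_range.mpr fun _ => norm_nonneg _⟩ (0 : 𝕜 ∙ v)
  have hs := (Submodule.norm_eq_iInf_iff_inner_eq_zero _ (zero_mem _)).mp hmin v
    (Submodule.mem_span_singleton_self v)
  rw [sub_zero] at hs
  exact inner_eq_zero_symm.mp hs

theorem Polynomial.aeval_star {R A : Type*} [CommSemiring R] [StarRing R] [Semiring A]
    [StarRing A] [Algebra R A] [StarModule R A] (a : A) (p : R[X]) :
    aeval (star a) p = star (aeval a (p.map (starRingEnd R))) := by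
  induction p using Polynomial.induction_on' with
  | add p q hp hq => simp [hp, hq]
  | monomial n c =>
    simp [aeval_monomial, Algebra.algebraMap_eq_smul_one, star_smul, starRingEnd_apply]

theorem Matrix.inner_toLp_conjTranspose_mulVec {𝕜 ι κ : Type*} [RCLike 𝕜] [Fintype ι]
    [Fintype κ] (M : Matrix ι κ 𝕜) (x : ι → 𝕜) (y : κ → 𝕜) :
    ⟪toLp 2 (Mᴴ *ᵥ x), toLp 2 y⟫_𝕜 = ⟪toLp 2 x, toLp 2 (M *ᵥ y)⟫_𝕜 := by
  rw [EuclideanSpace.inner_toLp_toLp, EuclideanSpace.inner_toLp_toLp, star_mulVec,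
    conjTranspose_conjTranspose, dotProduct_comm, ← dotProduct_mulVec, dotProduct_comm]

namespace IsGMRESResidual

variable {n m : ℕ} {A : Matrix (Fin n) (Fin n) ℂ} {r s : Fin n → ℂ}

theorem inner_aeval_mulVec_eq_zero (h : IsGMRESResidual m A r s) {q : ℂ[X]}
    (hq : q.natDegree ≤ m) (hq0 : q.eval 0 = 0) :
    ⟪toLp 2 (aeval A q *ᵥ r), toLp 2 s⟫_ℂ = 0 := by
  obtain ⟨p, hp, hp0, rfl, hmin⟩ := h
  refine inner_eq_zero_of_forall_norm_le_norm_add_smul fun c => ?_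
  have hdeg : (p + C c * q).natDegree ≤ m :=
    natDegree_add_le_of_degree_le hp (natDegree_C_mul_le c q |>.trans hq)
  simpa [euclNorm, add_mulVec, ← Algebra.smul_def, smul_mulVec] using
    hmin _ hdeg (by simp [hp0, hq0])

theorem inner_aeval_mulVec (h : IsGMRESResidual m A r s) {q : ℂ[X]}
    (hq : q.natDegree ≤ m) (hq0 : q.eval 0 = 1) :
    ⟪toLp 2 s, toLp 2 (aeval A q *ᵥ r)⟫_ℂ = ⟪toLp 2 s, toLp 2 r⟫_ℂ := by
  have hdeg : (q - 1).natDegree ≤ m := (natDegree_sub_le _ _).trans (by simpa using hq)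
  have horth := inner_eq_zero_symm.mp (h.inner_aeval_mulVec_eq_zero hdeg (by simp [hq0]))
  rw [← sub_add_cancel q 1, map_add, map_one, add_mulVec, one_mulVec, toLp_add, inner_add_right,
    horth, zero_add]

theorem norm_sq_eq_inner (h : IsGMRESResidual m A r s) :
    (euclNorm s : ℂ) ^ 2 = ⟪toLp 2 s, toLp 2 r⟫_ℂ := by
  obtain ⟨p, hp, hp0, hs, -⟩ := id h
  rw [euclNorm, equiv_symm_apply, ← RCLike.ofReal_eq_complex_ofReal,
    ← inner_self_eq_norm_sq_to_K]
  nth_rewrite 2 [hs]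
  exact h.inner_aeval_mulVec hp hp0

theorem inner_aeval_conjTranspose_mulVec (h : IsGMRESResidual m A r s) {q : ℂ[X]}
    (hq : q.natDegree ≤ m) (hq0 : q.eval 0 = 1) :
    ⟪toLp 2 (aeval Aᴴ q *ᵥ s), toLp 2 r⟫_ℂ = ⟪toLp 2 s, toLp 2 r⟫_ℂ := by
  rw [← star_eq_conjTranspose, aeval_star, star_eq_conjTranspose,
    inner_toLp_conjTranspose_mulVec]
  exact h.inner_aeval_mulVec (natDegree_map_le.trans hq) (by rw [eval_zero_map, hq0, map_one])

end IsGMRESResidual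

theorem sq_norm_le_of_gmres_residuals_general {n : ℕ} (m : ℕ)
    (A : Matrix (Fin n) (Fin n) ℂ)
    (rkm1 rk rhat : Fin n → ℂ)
    (h1 : IsGMRESResidual m A rkm1 rk)
    (h2 : IsGMRESResidual m Aᴴ rk rhat) :
    euclNorm rk ^ 2 ≤ euclNorm rkm1 * euclNorm rhat := by
  obtain ⟨q, hq, hq0, rfl, -⟩ := h2
  have hinner : (euclNorm rk : ℂ) ^ 2 = ⟪toLp 2 (aeval Aᴴ q *ᵥ rk), toLp 2 rkm1⟫_ℂ := by
    rw [h1.inner_aeval_conjTranspose_mulVec hq hq0, h1.norm_sq_eq_inner]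
  calc euclNorm rk ^ 2 = ‖(euclNorm rk : ℂ) ^ 2‖ := by
        rw [norm_pow, Complex.norm_real, Real.norm_eq_abs, sq_abs]
    _ ≤ euclNorm (aeval Aᴴ q *ᵥ rk) * euclNorm rkm1 := hinner ▸ norm_inner_le_norm _ _
    _ = _ := mul_comm _ _

/-- For a normal invertible `A`: if `r_k` is a nonzero GMRES(m) residual of `A` from `r_{k-1}`
and `r̂_{k+1}` is a nonzero GMRES(m) residual of `Aᴴ` from `r_k`, then
`‖r_k‖² ≤ ‖r_{k-1}‖ ‖r̂_{k+1}‖`. -/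
theorem sq_norm_le_of_gmres_residuals {n : ℕ} (m : ℕ) (hm : 1 ≤ m) (hmn : m ≤ n - 1)
    (A : Matrix (Fin n) (Fin n) ℂ) (hnormal : A * Aᴴ = Aᴴ * A) (hA : IsUnit A)
    (rkm1 rk rhat : Fin n → ℂ)
    (h1 : IsGMRESResidual m A rkm1 rk) (hrk : rk ≠ 0)
    (h2 : IsGMRESResidual m Aᴴ rk rhat) (hrhat : rhat ≠ 0) :
    euclNorm rk ^ 2 ≤ euclNorm rkm1 * euclNorm rhat :=
  sq_norm_le_of_gmres_residuals_general m A rkm1 rk rhat h1 h2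
end
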